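/- arXiv:2007.09742 — 4 statements merged into one kernel-verified Lean document; each statement's English description precedes it below -/
import Mathlib

section
/- Naive A¹-homotopy fails to be transitive: on the scheme Spec k[x,y]/(xy), the k-points (0,1) and (0,0) are connected by a morphism from the affine line, and similarly (0,0) and (1,0), but there is no morphism h : Spec k[t] → Spec k[x,y]/(xy) with h(0) = (0,1) and h(1) = (1,0). -/
open Polynomial

/-! Since `k[t]` is a domain, a path `(f, g)` with `f g = 0` has `f = 0` or `g = 0`: it stays on
one axis, so it cannot join `(0,1)` to `(1,0)`. -/

/-- Naive `𝔸¹`-homotopy fails to be transitive: on `Spec k[x,y]/(xy)` (`k` an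
integral domain), the points `(0,1)` and `(0,0)` are naively `𝔸¹`-homotopic (i.e.
connected by a map from the affine line, given by `f, g ∈ k[t]` with `fg = 0`), and
so are `(0,0)` and `(1,0)`, but `(0,1)` and `(1,0)` are not. -/
theorem stmt10 {k : Type*} [CommRing k] [IsDomain k] :
    (∃ f g : Polynomial k, f * g = 0 ∧
      f.eval 0 = 0 ∧ g.eval 0 = 1 ∧ f.eval 1 = 0 ∧ g.eval 1 = 0) ∧
    (∃ f g : Polynomial k, f * g = 0 ∧
      f.eval 0 = 0 ∧ g.eval 0 = 0 ∧ f.eval 1 = 1 ∧ g.eval 1 = 0) ∧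
    ¬ ∃ f g : Polynomial k, f * g = 0 ∧
      f.eval 0 = 0 ∧ g.eval 0 = 1 ∧ f.eval 1 = 1 ∧ g.eval 1 = 0 := by
  refine ⟨⟨0, 1 - X, zero_mul _, by simp, by simp, by simp, by simp⟩,
    ⟨X, 0, mul_zero _, by simp, by simp, by simp, by simp⟩, ?_⟩
  rintro ⟨f, g, hfg, -, hg0, hf1, -⟩
  rcases mul_eq_zero.mp hfg with rfl | rfl
  · simp at hf1
  · simp at hg0
end

section
/- If f : Aⁿ → Aⁿ (given by polynomials) satisfies f(0) = 0 and the Jacobian determinant Jac(f)(0) is nonzero, then the local algebra Q₀(f) = k[x₁,…,xₙ]_(x₁,…,xₙ)/(f₁,…,fₙ) is a 1-dimensional k-vector space, and the EKL form equals the rank-one form ⟨Jac(f)(0)⟩. -/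
/-!
Write `f = a x` with `a` a matrix of polynomials, so that `det a(0) = Jac(f)(0) ≠ 0`. In the
local ring `A = k[x]_(x)` the matrix `a` is then invertible, hence the `fᵢ` generate the same
ideal as the `xᵢ`, namely the maximal ideal. So `Q₀(f)` is the residue field `k`, identified by
evaluation at `0`, and `E₀(f) = det a` becomes the scalar `Jac(f)(0)`. A linear functional on `k`
is multiplication by `η(1)`, and `η(E₀(f)) = 1` forces `η(1) = Jac(f)(0)⁻¹`; rescaling the
identification by `η(1)` turns `η(uv)` into `Jac(f)(0) · e(u) e(v)`.
-/

open MvPolynomial Matrix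

attribute [local instance] RingHom.ker_isPrime

theorem Ideal.span_range_mulVec_le {R m n : Type*} [CommSemiring R] [Fintype n]
    (M : Matrix m n R) (x : n → R) :
    Ideal.span (Set.range (M *ᵥ x)) ≤ Ideal.span (Set.range x) := by
  rw [Ideal.span_le]
  rintro _ ⟨i, rfl⟩
  exact Ideal.sum_mem _ fun j _ => Ideal.mul_mem_left _ _ (Ideal.subset_span ⟨j, rfl⟩)

theorem Ideal.span_range_mulVec_of_isUnit_det {R n : Type*} [CommRing R] [Fintype n]
    [DecidableEq n] {M : Matrix n n R} (hM : IsUnit M.det) (x : n → R) :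
    Ideal.span (Set.range (M *ᵥ x)) = Ideal.span (Set.range x) := by
  refine le_antisymm (span_range_mulVec_le M x) ?_
  calc Ideal.span (Set.range x) = Ideal.span (Set.range (M⁻¹ *ᵥ M *ᵥ x)) := by
        rw [Matrix.mulVec_mulVec, Matrix.nonsing_inv_mul M hM, Matrix.one_mulVec]
    _ ≤ Ideal.span (Set.range (M *ᵥ x)) := span_range_mulVec_le _ _

namespace MvPolynomial

variable {σ R : Type*} [CommSemiring R]

theorem ker_eval_zero : RingHom.ker (eval (0 : σ → R)) = idealOfVars σ R := by
  ext p
  rw [RingHom.mem_ker, eval_zero, ← pow_one (idealOfVars σ R), mem_pow_idealOfVars_iff']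
  simp [Finsupp.degree_eq_zero_iff, constantCoeff]

theorem exists_eq_sum_mul_X_of_eval_zero [Fintype σ] {p : MvPolynomial σ R}
    (hp : eval 0 p = 0) : ∃ c : σ → MvPolynomial σ R, p = ∑ j, c j * X j := by
  rw [← RingHom.mem_ker, ker_eval_zero, idealOfVars, Ideal.mem_span_range_iff_exists_fun] at hp
  obtain ⟨c, hc⟩ := hp
  exact ⟨c, hc.symm⟩

theorem eval_zero_pderiv_sum_mul_X [Fintype σ] (c : σ → MvPolynomial σ R) (j : σ) :
    eval 0 (pderiv j (∑ i, c i * X i)) = eval 0 (c j) := by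
  classical
  simp [pderiv_X, Pi.single_apply, mul_ite, eq_comm, apply_ite constantCoeff, Finset.sum_ite_eq]

theorem det_jacobian_eval_zero {R : Type*} [CommRing R] [Fintype σ] [DecidableEq σ]
    {f : σ → MvPolynomial σ R} {a : Matrix σ σ (MvPolynomial σ R)}
    (ha : ∀ i, f i = ∑ j, a i j * X j) :
    (Matrix.of fun i j => eval 0 (pderiv j (f i))).det = eval 0 a.det := by
  rw [RingHom.map_det]
  congr 1
  ext i j
  rw [Matrix.of_apply, ha i, eval_zero_pderiv_sum_mul_X]
  rfl

end MvPolynomial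

theorem Localization.AtPrime.span_range_algebraMap_mulVec {R ι : Type*} [CommRing R]
    [Fintype ι] [DecidableEq ι] {P : Ideal R} [P.IsPrime] {M : Matrix ι ι R} (hM : M.det ∉ P)
    {g : ι → R} (hg : Ideal.span (Set.range g) = P) :
    Ideal.span (Set.range fun i => algebraMap R (Localization.AtPrime P) ((M *ᵥ g) i)) =
      IsLocalRing.maximalIdeal _ := by
  have hunit : IsUnit (M.map (algebraMap R (Localization.AtPrime P))).det := by
    rw [show (M.map _).det = _ from ((algebraMap R _).map_det M).symm,
      IsLocalization.AtPrime.isUnit_to_map_iff _ P]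
    exact hM
  simp_rw [RingHom.map_mulVec]
  rw [Ideal.span_range_mulVec_of_isUnit_det hunit, Set.range_comp, ← Ideal.map_span, hg,
    Localization.AtPrime.map_eq_maximalIdeal]

section LiftKer

variable {k R K : Type*} [CommSemiring k] [CommSemiring R] [Field K] [Algebra k R] [Algebra k K]
  (φ : R →ₐ[k] K)

noncomputable def AlgHom.liftLocalizationAtKer :
    Localization.AtPrime (RingHom.ker φ) →ₐ[k] K :=
  IsLocalization.liftAlgHom (M := (RingHom.ker φ).primeCompl) (f := φ)
    fun y => isUnit_iff_ne_zero.mpr fun h => y.2 (RingHom.mem_ker.mpr h)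

@[simp]
theorem AlgHom.liftLocalizationAtKer_algebraMap (r : R) :
    φ.liftLocalizationAtKer (algebraMap R _ r) = φ r :=
  IsLocalization.lift_eq _ r

theorem AlgHom.ker_liftLocalizationAtKer :
    RingHom.ker φ.liftLocalizationAtKer = IsLocalRing.maximalIdeal _ := by
  refine le_antisymm (IsLocalRing.le_maximalIdeal (RingHom.ker_ne_top _)) ?_
  rw [← Localization.AtPrime.map_eq_maximalIdeal, Ideal.map_le_iff_le_comap]
  intro r hr
  rw [Ideal.mem_comap, RingHom.mem_ker, liftLocalizationAtKer_algebraMap]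
  exact hr

end LiftKer

theorem AlgEquiv.exists_linearEquiv_apply_mul_eq {k Q : Type*} [Field k] [Semiring Q]
    [Algebra k Q] (ε : Q ≃ₐ[k] k) (η : Q →ₗ[k] k) {s : Q} (hs : η s = 1) :
    ∃ e : Q ≃ₗ[k] k, ∀ u v, η (u * v) = ε s * (e u * e v) := by
  have hη (u : Q) : η u = ε u * η 1 := by
    calc η u = η (ε u • 1) := congrArg η (ε.injective (by simp))
      _ = ε u * η 1 := by rw [map_smul, smul_eq_mul]
  have hs' : ε s * η 1 = 1 := (hη s).symm.trans hs
  refine ⟨ε.toLinearEquiv.trans (.smulOfNeZero k k (η 1) (right_ne_zero_of_mul_eq_one hs')),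
    fun u v => ?_⟩
  simp only [LinearEquiv.trans_apply, AlgEquiv.toLinearEquiv_apply,
    LinearEquiv.smulOfNeZero_apply, smul_eq_mul]
  rw [hη, map_mul]
  linear_combination (-(η 1 * ε u * ε v)) * hs'

/-- If `f : 𝔸ⁿ → 𝔸ⁿ` is given by polynomials `f₁, …, fₙ` with `f(0) = 0` and the
Jacobian determinant `Jac(f)(0)` is nonzero, then the local algebra
`Q₀(f) = k[x₁,…,xₙ]_(x₁,…,xₙ)/(f₁,…,fₙ)` is a 1-dimensional `k`-vector space, and
for any presentation `fᵢ = Σⱼ aᵢⱼ xⱼ` (defining the socle element `E₀(f) = det(aᵢⱼ)`)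
and any `k`-linear functional `η` with `η(E₀(f)) = 1`, the EKL form `(u,v) ↦ η(uv)`
is isometric to the rank-one form `⟨Jac(f)(0)⟩`. -/
theorem stmt12 {k : Type*} [Field k] (n : ℕ) (f : Fin n → MvPolynomial (Fin n) k)
    (h0 : ∀ i, eval (0 : Fin n → k) (f i) = 0)
    (hJ : (Matrix.of fun i j => eval (0 : Fin n → k) (pderiv j (f i))).det ≠ 0) :
    letI P : Ideal (MvPolynomial (Fin n) k) := RingHom.ker (eval (0 : Fin n → k))
    haveI hP : P.IsPrime := RingHom.ker_isPrime _
    letI A := Localization.AtPrime P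
    letI I : Ideal A := Ideal.span (Set.range fun i => algebraMap _ A (f i))
    letI Q := A ⧸ I
    Module.finrank k Q = 1 ∧
    ∀ a : Matrix (Fin n) (Fin n) (MvPolynomial (Fin n) k),
      (∀ i, f i = ∑ j, a i j * X j) →
      ∀ η : Q →ₗ[k] k,
        η (Ideal.Quotient.mk I (algebraMap _ A (Matrix.det a))) = 1 →
        ∃ e : Q ≃ₗ[k] k, ∀ u v : Q,
          η (u * v) =
            (Matrix.of fun i j => eval (0 : Fin n → k) (pderiv j (f i))).det *
              (e u * e v) := by
  set A := Localization.AtPrime (RingHom.ker (eval (0 : Fin n → k)))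
  set I : Ideal A := Ideal.span (Set.range fun i => algebraMap _ A (f i)) with hI_def
  -- `RingHom.ker (aeval 0)` is definitionally `RingHom.ker (eval 0)`.
  let φ : A →ₐ[k] k := (aeval 0 : MvPolynomial (Fin n) k →ₐ[k] k).liftLocalizationAtKer
  choose c hc using fun i => exists_eq_sum_mul_X_of_eval_zero (h0 i)
  have hI : I = RingHom.ker φ := by
    have hdet : (Matrix.of c).det ∉ RingHom.ker (eval (0 : Fin n → k)) := by
      rwa [RingHom.mem_ker, ← det_jacobian_eval_zero (a := .of c) hc]
    rw [hI_def, show f = .of c *ᵥ X from funext hc,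
      Localization.AtPrime.span_range_algebraMap_mulVec hdet ker_eval_zero.symm]
    exact (aeval 0).ker_liftLocalizationAtKer.symm
  let ε : (A ⧸ I) ≃ₐ[k] k := (Ideal.quotientEquivAlgOfEq k hI).trans
    (Ideal.quotientKerAlgEquivOfSurjective fun x => ⟨algebraMap k A x, φ.commutes x⟩)
  refine ⟨ε.toLinearEquiv.finrank_eq.trans (Module.finrank_self k), fun a ha η hη => ?_⟩
  have hεdet : ε (Ideal.Quotient.mk I (algebraMap _ A a.det)) =
      (Matrix.of fun i j => eval (0 : Fin n → k) (pderiv j (f i))).det := by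
    rw [det_jacobian_eval_zero ha]
    exact AlgHom.liftLocalizationAtKer_algebraMap _ _
  obtain ⟨e, he⟩ := ε.exists_linearEquiv_apply_mul_eq η hη
  exact ⟨e, fun u v => by rw [he, hεdet]⟩
end

section
/- If Jac(f) is a nonzero element of the local algebra Q₀(f) for f = (f₁,…,fₙ) with isolated zero at the origin, then Jac(f) = dim_k(Q₀(f)) · E₀(f) in Q₀(f), in the special case n = 1: for f ∈ k[z] with f(0) = 0 and f = z·a(z), one has f'(z) = m·a(z) in k[z]_(z)/(f) where m = dim_k Q₀(f). -/
/-!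
Write `f = z ^ m * u` with `u(0) ≠ 0`. As `u` is a unit of `k[z]_(z)`,
`Q₀(f) = k[z]_(z) ⧸ (z ^ m)`, and since polynomials prime to `z` are already units modulo `z ^ m`,
this is `k[z] ⧸ (z ^ m)`, of dimension `m`. Cancelling `z` gives `a = z ^ (m - 1) * u`, so
`f' = m • a + z ^ m * u'`, and `z ^ m` vanishes in `Q₀(f)`.
-/

open Polynomial

/-- The multiplicative set of polynomials not vanishing at `0`, so that
`Localization (evalNeZero k) = k[z]_(z)`. -/
def evalNeZero (k : Type*) [Field k] : Submonoid (Polynomial k) where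
  carrier := {g | g.eval 0 ≠ 0}
  one_mem' := by simp
  mul_mem' := by
    intro a b ha hb
    simp only [Set.mem_setOf_eq, eval_mul] at *
    exact mul_ne_zero ha hb

namespace IsLocalization

variable {R S : Type*} [CommRing R] [CommRing S] [Algebra R S] (M : Submonoid R)
  [IsLocalization M S]

noncomputable def quotientAlgEquivOfIsUnit (I : Ideal R)
    (hM : ∀ m ∈ M, IsUnit (Ideal.Quotient.mk I m)) :
    (R ⧸ I) ≃ₐ[R] S ⧸ I.map (algebraMap R S) :=
  (atUnits (R ⧸ I) (Algebra.algebraMapSubmonoid (R ⧸ I) M) (by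
    rintro _ ⟨m, hm, rfl⟩
    exact hM m hm)).restrictScalars R

end IsLocalization

namespace Polynomial

theorem exists_eq_X_pow_rootMultiplicity_mul {R : Type*} [CommRing R] {f : R[X]} (hf : f ≠ 0) :
    ∃ u, f = X ^ f.rootMultiplicity 0 * u ∧ u.eval 0 ≠ 0 := by
  obtain ⟨u, hfu, hu⟩ := exists_eq_pow_rootMultiplicity_mul_and_not_dvd f hf 0
  rw [C_0, sub_zero] at hfu hu
  exact ⟨u, hfu, fun h => hu (X_dvd_iff.2 (by rwa [coeff_zero_eq_eval_zero]))⟩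

theorem derivative_X_pow_succ_mul {R : Type*} [CommSemiring R] (n : ℕ) (u : R[X]) :
    derivative (X ^ (n + 1) * u) = (n + 1) • (X ^ n * u) + X ^ (n + 1) * derivative u := by
  rw [derivative_mul, derivative_X_pow, C_eq_natCast, nsmul_eq_mul, Nat.add_sub_cancel]
  push_cast
  ring

variable {k : Type*} [Field k]

theorem isUnit_mk_span_X_pow_of_eval_ne_zero {q : k[X]} (hq : q.eval 0 ≠ 0) (m : ℕ) :
    IsUnit (Ideal.Quotient.mk (Ideal.span {X ^ m}) q) := by
  have hX : IsCoprime X q :=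
    irreducible_X.coprime_iff_not_dvd.2 fun h =>
      hq (by rwa [← coeff_zero_eq_eval_zero, ← X_dvd_iff])
  obtain ⟨c, d, hcd⟩ := hX.pow_left (m := m)
  refine IsUnit.of_mul_eq_one (Ideal.Quotient.mk _ d) ?_
  rw [← map_mul, ← sub_eq_zero, ← map_one (Ideal.Quotient.mk _), ← map_sub,
    Ideal.Quotient.eq_zero_iff_mem, Ideal.mem_span_singleton]
  exact ⟨-c, by linear_combination hcd⟩

end Polynomial

section LocalAlgebra

variable {k : Type*} [Field k]

local notation "A" => Localization (evalNeZero k)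

theorem finrank_quotient_span_algebraMap_X_pow (m : ℕ) :
    Module.finrank k (A ⧸ Ideal.span {algebraMap k[X] A (X ^ m)}) = m := by
  rw [← Set.image_singleton, ← Ideal.map_span]
  let e := IsLocalization.quotientAlgEquivOfIsUnit (S := A) (evalNeZero k) (Ideal.span {X ^ m})
    fun q hq => isUnit_mk_span_X_pow_of_eval_ne_zero hq m
  rw [← (e.restrictScalars k).toLinearEquiv.finrank_eq, finrank_quotient_span_eq_natDegree,
    natDegree_X_pow]

theorem span_algebraMap_X_pow_mul {u : k[X]} (hu : u.eval 0 ≠ 0) (m : ℕ) :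
    Ideal.span {algebraMap k[X] A (X ^ m * u)} = Ideal.span {algebraMap k[X] A (X ^ m)} := by
  rw [map_mul]
  exact Ideal.span_singleton_mul_right_unit
    (IsLocalization.map_units A (⟨u, hu⟩ : evalNeZero k)) _

end LocalAlgebra

theorem stmt14_general {k : Type*} [Field k]
    (f a : Polynomial k) (hfa : f = X * a) (hf : f ≠ 0) :
    letI A := Localization (evalNeZero k)
    letI I : Ideal A := Ideal.span {algebraMap (Polynomial k) A f}
    letI Q := A ⧸ I
    Module.finrank k Q = f.rootMultiplicity 0 ∧
    Ideal.Quotient.mk I (algebraMap (Polynomial k) A (derivative f)) =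
      (Module.finrank k Q) •
        Ideal.Quotient.mk I (algebraMap (Polynomial k) A a) := by
  obtain ⟨u, hfu, hu⟩ := exists_eq_X_pow_rootMultiplicity_mul hf
  obtain ⟨n, hn⟩ : ∃ n, f.rootMultiplicity 0 = n + 1 :=
    Nat.exists_eq_add_one.2 ((rootMultiplicity_pos hf).2 (by simp [hfa]))
  rw [hn] at hfu
  have ha : a = X ^ n * u :=
    isRegular_X.left <| show X * a = X * (X ^ n * u) by rw [← hfa, hfu, pow_succ', mul_assoc]
  have hrank : Module.finrank k (Localization (evalNeZero k) ⧸
      Ideal.span {algebraMap k[X] (Localization (evalNeZero k)) f}) = n + 1 := by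
    rw [hfu, span_algebraMap_X_pow_mul hu, finrank_quotient_span_algebraMap_X_pow]
  have hderiv : derivative f - (n + 1) • a = X ^ (n + 1) * derivative u := by
    rw [hfu, derivative_X_pow_succ_mul, ← ha, add_sub_cancel_left]
  refine ⟨hrank.trans hn.symm, ?_⟩
  simp only [hrank]
  rw [← map_nsmul, ← map_nsmul, ← sub_eq_zero, ← map_sub, ← map_sub, hderiv,
    Ideal.Quotient.eq_zero_iff_mem, hfu, span_algebraMap_X_pow_mul hu, map_mul]
  exact Ideal.mul_mem_right _ _ (Ideal.subset_span rfl)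

/-- `Jac(f) = dim_k Q₀(f) · E₀(f)` in `Q₀(f)`, in the case `n = 1` and `char k = 0`:
for `f ∈ k[z]` with `f(0) = 0`, written `f = z · a(z)` (so `E₀(f) = a`), the image of
`f'` in `Q₀(f) = k[z]_(z)/(f)` equals `m` times the image of `a`, where
`m = dim_k Q₀(f)` (which equals the order of vanishing of `f` at `0`). -/
theorem stmt14 {k : Type*} [Field k] [CharZero k]
    (f a : Polynomial k) (hfa : f = X * a) (hf : f ≠ 0) :
    letI A := Localization (evalNeZero k)
    letI I : Ideal A := Ideal.span {algebraMap (Polynomial k) A f}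
    letI Q := A ⧸ I
    Module.finrank k Q = f.rootMultiplicity 0 ∧
    Ideal.Quotient.mk I (algebraMap (Polynomial k) A (derivative f)) =
      (Module.finrank k Q) •
        Ideal.Quotient.mk I (algebraMap (Polynomial k) A a) :=
  stmt14_general f a hfa hf
end

section
/- The A¹-Milnor number of the cusp f(x,y) = x³ − y² over a field k with char k ∉ {2,3} is the hyperbolic form: the EKL class of grad f = (3x², −2y) at the origin equals ⟨1⟩ + ⟨−1⟩ in GW(k). Concretely, Q₀(grad f) ≅ k[x]/(x²) and the EKL form has Gram matrix congruent to [[0, 1/3],[1/3, 0]] scaled by ⟨−2⟩, which is the hyperbolic class. -/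
/-!
Since `3` and `-2` are units, the ideal `(3x², -2y)` equals `(x², y)`, so killing `y` gives
`Q₀(grad f) ≅ k[x]/(x²)`, with basis `{1, x}`. As `x² = 0`, the EKL form `(u, v) ↦ η(uv)` is
antidiagonal on this basis, `[[0, c], [c, 0]]` with `c = η(x) ≠ 0`, and every such form
is hyperbolic: rescaling the second basis vector turns `c` into any other nonzero constant, and
the basis `1 ± x/(2c)` diagonalises it to `diag(1, -1)`.
-/

open Polynomial Matrix

/-- `k[x]/(x²)`, the local algebra `Q₀(grad f)` of the cusp `f(x,y) = x³ - y²`. -/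
noncomputable abbrev QM (k : Type*) [Field k] : Type _ :=
  Polynomial k ⧸ Ideal.span {(X : Polynomial k) ^ 2}

noncomputable def xQM (k : Type*) [Field k] : QM k :=
  Ideal.Quotient.mk _ (X : Polynomial k)

namespace MvPolynomial

variable {R : Type*} [CommRing R]

noncomputable def quotientSpanAevalXZeroXOneEquiv (p : R[X]) :
    (MvPolynomial (Fin 2) R ⧸
        Ideal.span {Polynomial.aeval (X 0 : MvPolynomial (Fin 2) R) p, X 1}) ≃ₐ[R]
      R[X] ⧸ Ideal.span {p} :=
  let I : Ideal (MvPolynomial (Fin 2) R) := Ideal.span {Polynomial.aeval (X 0) p, X 1}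
  let J : Ideal R[X] := Ideal.span {p}
  let f : MvPolynomial (Fin 2) R →ₐ[R] R[X] ⧸ J :=
    aeval ![Ideal.Quotient.mkₐ R J Polynomial.X, 0]
  let g : R[X] →ₐ[R] MvPolynomial (Fin 2) R ⧸ I :=
    Polynomial.aeval (Ideal.Quotient.mkₐ R I (X 0))
  have hf : ∀ q ∈ I, f q = 0 := fun q hq => by
    refine (Ideal.span_le (I := RingHom.ker f).mpr ?_ hq :)
    rintro q (rfl | rfl) <;> simp only [SetLike.mem_coe, RingHom.mem_ker]
    · rw [← Polynomial.aeval_algHom_apply, aeval_X, Matrix.cons_val_zero,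
        Polynomial.aeval_algHom_apply, Polynomial.aeval_X_left_apply, Ideal.Quotient.mkₐ_eq_mk,
        Ideal.Quotient.eq_zero_iff_mem]
      exact Ideal.mem_span_singleton_self p
    · simp [f]
  have hg : ∀ q ∈ J, g q = 0 := fun q hq => by
    obtain ⟨r, rfl⟩ := Ideal.mem_span_singleton'.mp hq
    have hgp : g p = 0 := by
      rw [Polynomial.aeval_algHom_apply, Ideal.Quotient.mkₐ_eq_mk, Ideal.Quotient.eq_zero_iff_mem]
      exact Ideal.subset_span (Set.mem_insert _ _)
    rw [map_mul, hgp, mul_zero]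
  let Φ := Ideal.Quotient.liftₐ I f hf
  let Ψ := Ideal.Quotient.liftₐ J g hg
  have hΦ : Φ.comp (Ideal.Quotient.mkₐ R I) = f := Ideal.Quotient.liftₐ_comp _ _ _
  have hΨ : Ψ.comp (Ideal.Quotient.mkₐ R J) = g := Ideal.Quotient.liftₐ_comp _ _ _
  AlgEquiv.ofAlgHom Φ Ψ
    (Ideal.Quotient.algHom_ext _ <| Polynomial.algHom_ext <| by
      rw [AlgHom.comp_assoc, hΨ, AlgHom.comp_apply, Polynomial.aeval_X, ← AlgHom.comp_apply, hΦ]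
      exact aeval_X _ 0)
    (Ideal.Quotient.algHom_ext _ <| MvPolynomial.algHom_ext fun i => by
      have hΨX : Ψ (Ideal.Quotient.mkₐ R J Polynomial.X) = Ideal.Quotient.mkₐ R I (X 0) := by
        rw [← AlgHom.comp_apply, hΨ]; exact Polynomial.aeval_X _
      rw [AlgHom.comp_assoc, hΦ]
      fin_cases i
      · simpa [f] using hΨX
      · simpa [f] using (Ideal.Quotient.eq_zero_iff_mem.mpr
          (Ideal.subset_span (Set.mem_insert_of_mem _ rfl) : X 1 ∈ I)).symm)

end MvPolynomial

theorem AdjoinRoot.exists_basis_root_pow {R : Type*} [CommRing R] {p : R[X]} (hp : p.Monic)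
    {n : ℕ} (hn : p.natDegree = n) :
    ∃ b : Module.Basis (Fin n) R (AdjoinRoot p), ∀ i, b i = AdjoinRoot.root p ^ (i : ℕ) := by
  subst hn
  exact ⟨(AdjoinRoot.powerBasis' hp).basis, (AdjoinRoot.powerBasis' hp).basis_eq_pow⟩

theorem Ideal.span_pair_mul_left_units {α : Type*} [CommSemiring α] {u v : α} (hu : IsUnit u)
    (hv : IsUnit v) (x y : α) : Ideal.span {u * x, v * y} = Ideal.span {x, y} := by
  rw [Ideal.span_insert, Ideal.span_insert, Ideal.span_singleton_mul_left_unit hu,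
    Ideal.span_singleton_mul_left_unit hv]

section Congruence

variable {k : Type*} [Field k]

theorem exists_congruence_hyperbolic_scale {c d : k} (hc : c ≠ 0) (hd : d ≠ 0) :
    ∃ C : Matrix (Fin 2) (Fin 2) k, IsUnit C.det ∧
      Cᵀ * of ![![0, c], ![c, 0]] * C = of ![![0, d], ![d, 0]] := by
  refine ⟨of ![![1, 0], ![0, d / c]], ?_, ?_⟩
  · simp [det_fin_two_of, hc, hd]
  · ext i j
    fin_cases i <;> fin_cases j <;> simp [mul_apply, Fin.sum_univ_two] <;> field_simp

theorem exists_congruence_hyperbolic_diagonal {c : k} (h2 : (2 : k) ≠ 0) (hc : c ≠ 0) :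
    ∃ C : Matrix (Fin 2) (Fin 2) k, IsUnit C.det ∧
      Cᵀ * of ![![0, c], ![c, 0]] * C = diagonal ![1, -1] := by
  -- For `B(s, t) = c (s₀ t₁ + s₁ t₀)`, the columns `u = (1, 1/(2c))`, `v = (1, -1/(2c))`
  -- have `B(u, u) = 1`, `B(v, v) = -1`, `B(u, v) = 0`.
  refine ⟨of ![![1, 1], ![(2 * c)⁻¹, -(2 * c)⁻¹]], ?_, ?_⟩
  · rw [det_fin_two_of, isUnit_iff_ne_zero]
    field_simp
    norm_num [h2, hc]
  · ext i j
    fin_cases i <;> fin_cases j <;> simp [mul_apply, Fin.sum_univ_two] <;> field_simp <;> ring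

end Congruence

section DualNumbers

variable {k : Type*} [Field k]

theorem xQM_mul_self : xQM k * xQM k = 0 := by
  rw [xQM, ← map_mul, Ideal.Quotient.eq_zero_iff_mem, ← pow_two]
  exact Ideal.mem_span_singleton_self _

theorem exists_basis_one_xQM : ∃ b : Module.Basis (Fin 2) k (QM k), b 0 = 1 ∧ b 1 = xQM k := by
  obtain ⟨b, hb⟩ := AdjoinRoot.exists_basis_root_pow (monic_X_pow 2 : ((X : k[X]) ^ 2).Monic)
    (natDegree_X_pow 2)
  exact ⟨b, (hb 0).trans (pow_zero _), (hb 1).trans (pow_one _)⟩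

theorem finrank_QM : Module.finrank k (QM k) = 2 := by
  obtain ⟨b, -⟩ := exists_basis_one_xQM (k := k)
  rw [Module.finrank_eq_card_basis b, Fintype.card_fin]

theorem nonempty_quotient_grad_cusp_algEquiv_QM (h2 : (2 : k) ≠ 0) (h3 : (3 : k) ≠ 0) :
    Nonempty ((MvPolynomial (Fin 2) k ⧸
        Ideal.span {(MvPolynomial.C 3 * MvPolynomial.X 0 ^ 2 : MvPolynomial (Fin 2) k),
          MvPolynomial.C (-2) * MvPolynomial.X 1}) ≃ₐ[k] QM k) := by
  have hI : Ideal.span {(MvPolynomial.C 3 * MvPolynomial.X 0 ^ 2 : MvPolynomial (Fin 2) k),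
      MvPolynomial.C (-2) * MvPolynomial.X 1} =
      Ideal.span {Polynomial.aeval (MvPolynomial.X 0) (X ^ 2 : k[X]), MvPolynomial.X 1} := by
    rw [Ideal.span_pair_mul_left_units ((isUnit_iff_ne_zero.mpr h3).map _)
      ((isUnit_iff_ne_zero.mpr (neg_ne_zero.mpr h2)).map _)]
    simp
  exact ⟨(Ideal.quotientEquivAlgOfEq k hI).trans (MvPolynomial.quotientSpanAevalXZeroXOneEquiv _)⟩

end DualNumbers

/-- The `𝔸¹`-Milnor number of the cusp `f(x, y) = x³ - y²` over a field `k` with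
`char k ∉ {2, 3}` is the hyperbolic form: for `grad f = (3x², -2y)` one has
`Q₀(grad f) ≅ k[x]/(x²)` with basis `{1, x}`, socle element `E₀ = -6x`, and for the
functional `η` with `η(1) = 0` and `η(x) = -1/6` (so `η(E₀) = 1`), the EKL form
`(u,v) ↦ η(uv)` has Gram matrix `[[0, -1/6], [-1/6, 0]]`, which is congruent to
`(-2) • [[0, 1/3], [1/3, 0]]`, to the hyperbolic matrix `[[0,1],[1,0]]`, and to
`diag(1, -1)`; that is, `μ^{𝔸¹}₀(f) = ⟨1⟩ + ⟨-1⟩` in `GW(k)`. -/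
theorem stmt15 {k : Type*} [Field k] (h2 : (2 : k) ≠ 0) (h3 : (3 : k) ≠ 0) :
    -- `Q₀(grad f) ≅ k[x]/(x²)`
    Nonempty ((MvPolynomial (Fin 2) k ⧸
        Ideal.span {(MvPolynomial.C 3 * MvPolynomial.X 0 ^ 2 :
            MvPolynomial (Fin 2) k),
          MvPolynomial.C (-2) * MvPolynomial.X 1}) ≃ₐ[k] QM k) ∧
    -- basis `{1, x}`, dimension 2
    (∃ b : Module.Basis (Fin 2) k (QM k), b 0 = 1 ∧ b 1 = xQM k) ∧
    Module.finrank k (QM k) = 2 ∧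
    -- the EKL form
    ∀ η : QM k →ₗ[k] k, η 1 = 0 → η (xQM k) = -(1 / 6) →
      -- `η(E₀) = η(-6x) = 1`
      η ((-6 : k) • xQM k) = 1 ∧
      ∀ G : Matrix (Fin 2) (Fin 2) k,
        G = Matrix.of ![![η (1 * 1), η (1 * xQM k)],
          ![η (xQM k * 1), η (xQM k * xQM k)]] →
        G = Matrix.of ![![0, -(1/6)], ![-(1/6), 0]] ∧
        (∃ C : Matrix (Fin 2) (Fin 2) k, IsUnit C.det ∧
          Cᵀ * G * C = (-2 : k) • Matrix.of ![![0, 1/3], ![1/3, 0]]) ∧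
        (∃ C : Matrix (Fin 2) (Fin 2) k, IsUnit C.det ∧
          Cᵀ * G * C = Matrix.of ![![0, 1], ![1, 0]]) ∧
        (∃ C : Matrix (Fin 2) (Fin 2) k, IsUnit C.det ∧
          Cᵀ * G * C = Matrix.diagonal ![1, -1]) := by
  have h6 : (6 : k) ≠ 0 := by
    simpa [show (2 : k) * 3 = 6 by norm_num] using mul_ne_zero h2 h3
  refine ⟨nonempty_quotient_grad_cusp_algEquiv_QM h2 h3, exists_basis_one_xQM, finrank_QM,
    fun η hη1 hηx => ⟨?_, fun G hG => ?_⟩⟩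
  · rw [map_smul, hηx, smul_eq_mul]
    field_simp
  have hGram : G = of ![![0, -(1 / 6)], ![-(1 / 6), 0]] := by
    simp [hG, xQM_mul_self, hη1, hηx]
  have hc : -(1 / 6 : k) ≠ 0 := by simpa using h6
  subst hGram
  refine ⟨rfl, ?_, exists_congruence_hyperbolic_scale hc one_ne_zero,
    exists_congruence_hyperbolic_diagonal h2 hc⟩
  simpa [smul_of] using
    exists_congruence_hyperbolic_scale hc (d := -2 * (1 / 3))
      (mul_ne_zero (neg_ne_zero.mpr h2) (one_div_ne_zero h3))
end
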